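/- arXiv:math/0607186 — 2 statements merged into one kernel-verified Lean document; each statement's English description precedes it below -/
import Mathlib

section
/- There exists a constant C > 0 such that for every ρ ≥ 0, the integral ∫_ρ^∞ s / √(cosh s − cosh ρ) ds is at most C · √(ρ / sinh ρ) · √(1 + ρ), where for ρ = 0 the quantity ρ/sinh ρ is interpreted as 1. -/
/-!
With `u = s - ρ`, `cosh s - cosh ρ = 2 sinh (ρ + u/2) sinh (u/2)`. Since `sinh x / x` is
nondecreasing on `[0, ∞)`, `2 sinh (ρ + u/2) ≥ s sinh ρ / ρ`, so the squared integrand is at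
most `(ρ / sinh ρ) s / sinh (u/2)`, and `s ≤ (1 + ρ)(1 + u)` bounds this by
`(ρ / sinh ρ)(1 + ρ) · 32 e^{-u/8} / u`. The square root of the last factor is integrable on
`(0, ∞)`, so `C` can be taken to be its integral plus one.
-/

open MeasureTheory Set Real

namespace Real

lemma sinh_le_mul_cosh {x : ℝ} (hx : 0 ≤ x) : sinh x ≤ x * cosh x := by
  have hderiv (y : ℝ) : HasDerivAt (fun x ↦ x * cosh x - sinh x) (y * sinh y) y :=
    (((hasDerivAt_id' y).mul (hasDerivAt_cosh y)).sub (hasDerivAt_sinh y)).congr_deriv (by ring)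
  have hmono : MonotoneOn (fun x ↦ x * cosh x - sinh x) (Ici 0) := by
    refine monotoneOn_of_deriv_nonneg (convex_Ici 0) (by fun_prop) (by fun_prop) fun y hy ↦ ?_
    rw [interior_Ici, mem_Ioi] at hy
    rw [(hderiv y).deriv]
    exact mul_nonneg hy.le (sinh_nonneg_iff.mpr hy.le)
  simpa using hmono self_mem_Ici hx hx

lemma add_mul_sinh_le_mul_sinh_add {x y : ℝ} (hx : 0 ≤ x) (hy : 0 ≤ y) :
    (x + y) * sinh x ≤ x * sinh (x + y) := by
  have hsinhx : 0 ≤ sinh x := sinh_nonneg_iff.mpr hx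
  have hsinhy : 0 ≤ sinh y := sinh_nonneg_iff.mpr hy
  calc (x + y) * sinh x = x * sinh x * 1 + y * sinh x := by ring
    _ ≤ x * sinh x * cosh y + sinh y * sinh x := by
      gcongr
      · exact one_le_cosh y
      · exact self_le_sinh_iff.mpr hy
    _ ≤ x * sinh x * cosh y + sinh y * (x * cosh x) := by gcongr; exact sinh_le_mul_cosh hx
    _ = x * sinh (x + y) := by rw [sinh_add]; ring

lemma mul_exp_le_sinh_two_mul {x : ℝ} (hx : 0 ≤ x) : x * exp x ≤ sinh (2 * x) := by
  rw [sinh_two_mul, ← cosh_add_sinh]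
  nlinarith [self_le_sinh_iff.mpr hx, cosh_sub_sinh x, exp_pos (-x), sinh_nonneg_iff.mpr hx]

lemma cosh_sub_cosh (x y : ℝ) :
    cosh x - cosh y = 2 * sinh ((x + y) / 2) * sinh ((x - y) / 2) := by
  have h1 := cosh_add ((x + y) / 2) ((x - y) / 2)
  have h2 := cosh_sub ((x + y) / 2) ((x - y) / 2)
  rw [show (x + y) / 2 + (x - y) / 2 = x by ring] at h1
  rw [show (x + y) / 2 - (x - y) / 2 = y by ring] at h2
  linarith

end Real

lemma setIntegral_comp_sub_right_Ioi {E : Type*} [NormedAddCommGroup E] [NormedSpace ℝ E]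
    (f : ℝ → E) (a : ℝ) : ∫ x in Ioi a, f (x - a) = ∫ x in Ioi 0, f x := by
  have hpre : (fun x ↦ x - a) ⁻¹' Ioi 0 = Ioi a := by ext x; simp
  simpa only [hpre] using (measurePreserving_sub_right volume a).setIntegral_preimage_emb
    (MeasurableEquiv.subRight a).measurableEmbedding f (Ioi 0)

lemma IntegrableOn.comp_sub_right_Ioi {E : Type*} [NormedAddCommGroup E] {f : ℝ → E}
    (hf : IntegrableOn f (Ioi 0)) (a : ℝ) : IntegrableOn (fun x ↦ f (x - a)) (Ioi a) := by
  have hpre : (fun x ↦ x - a) ⁻¹' Ioi 0 = Ioi a := by ext x; simp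
  simpa only [hpre, Function.comp_def] using
    ((measurePreserving_sub_right volume a).integrableOn_comp_preimage
      (MeasurableEquiv.subRight a).measurableEmbedding).mpr hf

lemma self_add_le_mul_sinh_add {ρ v : ℝ} (hρ : 0 ≤ ρ) (hv : 0 ≤ v) :
    ρ + v ≤ (if ρ = 0 then 1 else ρ / sinh ρ) * sinh (ρ + v) := by
  rcases hρ.eq_or_lt with rfl | hρ
  · simpa using self_le_sinh_iff.mpr hv
  · rw [if_neg hρ.ne', div_mul_eq_mul_div, le_div_iff₀ (sinh_pos_iff.mpr hρ)]
    exact add_mul_sinh_le_mul_sinh_add hρ.le hv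

lemma mul_sinh_half_sub_le_mul_cosh_sub_cosh {ρ s : ℝ} (hρ : 0 ≤ ρ) (hs : ρ ≤ s) :
    s * sinh ((s - ρ) / 2) ≤ (if ρ = 0 then 1 else ρ / sinh ρ) * (cosh s - cosh ρ) := by
  set v := (s - ρ) / 2
  have hv : 0 ≤ v := by simp only [v]; linarith
  have hsinh : 0 ≤ sinh v := sinh_nonneg_iff.mpr hv
  rw [cosh_sub_cosh, show (s + ρ) / 2 = ρ + v by simp only [v]; ring]
  calc s * sinh v ≤ 2 * (ρ + v) * sinh v := by gcongr; simp only [v]; linarith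
    _ ≤ 2 * ((if ρ = 0 then 1 else ρ / sinh ρ) * sinh (ρ + v)) * sinh v := by
      gcongr; exact self_add_le_mul_sinh_add hρ hv
    _ = _ := by ring

lemma mul_one_add_mul_exp_le_sinh {u : ℝ} (hu : 0 ≤ u) :
    u * (1 + u) * exp (u / 8) ≤ 32 * sinh (u / 2) := by
  have hsinh := mul_exp_le_sinh_two_mul (x := u / 4) (by positivity)
  have hlin : 1 + u ≤ 8 * exp (u / 8) := by linarith [add_one_le_exp (u / 8)]
  calc u * (1 + u) * exp (u / 8) ≤ u * (8 * exp (u / 8)) * exp (u / 8) := by gcongr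
    _ = 32 * (u / 4 * exp (u / 4)) := by
      rw [show u / 4 = u / 8 + u / 8 by ring, exp_add]; ring
    _ ≤ 32 * sinh (u / 2) := by rw [show u / 2 = 2 * (u / 4) by ring]; gcongr

lemma sq_div_cosh_sub_cosh_le {ρ s : ℝ} (hρ : 0 ≤ ρ) (hs : ρ < s) :
    s ^ 2 / (cosh s - cosh ρ) ≤
      (if ρ = 0 then 1 else ρ / sinh ρ) * (1 + ρ) *
        (32 / (s - ρ) * exp (-((s - ρ) / 8))) := by
  set u := s - ρ
  have hu : 0 < u := sub_pos.mpr hs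
  have hs0 : 0 < s := hρ.trans_lt hs
  have hD : 0 < cosh s - cosh ρ :=
    sub_pos.mpr (cosh_strictMonoOn (mem_Ici.mpr hρ) (mem_Ici.mpr hs0.le) hs)
  have hexp : exp (u / 8) * exp (-(u / 8)) = 1 := by rw [← exp_add]; simp
  have hsu : s * (u * exp (u / 8)) ≤ (1 + ρ) * (32 * sinh (u / 2)) :=
    calc s * (u * exp (u / 8)) ≤ (1 + ρ) * (1 + u) * (u * exp (u / 8)) := by
          gcongr; simp only [u]; nlinarith
      _ = (1 + ρ) * (u * (1 + u) * exp (u / 8)) := by ring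
      _ ≤ (1 + ρ) * (32 * sinh (u / 2)) := by
          gcongr (1 + ρ) * ?_; exact mul_one_add_mul_exp_le_sinh hu.le
  rw [div_le_iff₀ hD]
  calc s ^ 2 = s * (s * (u * exp (u / 8))) * (1 / u * exp (-(u / 8))) := by
        field_simp; exact hexp.symm
    _ ≤ s * ((1 + ρ) * (32 * sinh (u / 2))) * (1 / u * exp (-(u / 8))) := by gcongr
    _ = 32 * (1 + ρ) * (s * sinh (u / 2)) * (1 / u * exp (-(u / 8))) := by ring
    _ ≤ 32 * (1 + ρ) * ((if ρ = 0 then 1 else ρ / sinh ρ) * (cosh s - cosh ρ)) *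
          (1 / u * exp (-(u / 8))) := by
        gcongr 32 * (1 + ρ) * ?_ * _; exact mul_sinh_half_sub_le_mul_cosh_sub_cosh hρ hs.le
    _ = _ := by ring

lemma div_sqrt_cosh_sub_cosh_le {ρ s : ℝ} (hρ : 0 ≤ ρ) (hs : ρ < s) :
    s / √(cosh s - cosh ρ) ≤
      √(if ρ = 0 then 1 else ρ / sinh ρ) * √(1 + ρ) *
        √(32 / (s - ρ) * exp (-((s - ρ) / 8))) := by
  have hs0 : 0 < s := hρ.trans_lt hs
  have hD : 0 ≤ cosh s - cosh ρ :=
    sub_nonneg.mpr (cosh_strictMonoOn (mem_Ici.mpr hρ) (mem_Ici.mpr hs0.le) hs).le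
  have hm : 0 ≤ 32 / (s - ρ) * exp (-((s - ρ) / 8)) := by
    have := sub_pos.mpr hs; positivity
  calc s / √(cosh s - cosh ρ) = √(s ^ 2 / (cosh s - cosh ρ)) := by
        rw [sqrt_div' _ hD, sqrt_sq hs0.le]
    _ ≤ _ := sqrt_le_sqrt (sq_div_cosh_sub_cosh_le hρ hs)
    _ = _ := by rw [sqrt_mul' _ hm, sqrt_mul' _ (by linarith)]

lemma integrableOn_sqrt_div_mul_exp :
    IntegrableOn (fun u ↦ √(32 / u * exp (-(u / 8)))) (Ioi 0) := by
  have h := (integrableOn_rpow_mul_exp_neg_mul_rpow (s := -(1 / 2)) (p := 1) (b := 1 / 16)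
    (by norm_num) one_pos (by norm_num)).const_mul √32
  refine IntegrableOn.congr_fun h (fun u (hu : 0 < u) ↦ ?_) measurableSet_Ioi
  have hexp : exp (-(u / 8)) = exp (-(1 / 16) * u) ^ 2 := by rw [← exp_nat_mul]; ring_nf
  rw [rpow_one, rpow_neg hu.le, ← sqrt_eq_rpow, hexp, sqrt_mul' _ (sq_nonneg _),
    sqrt_sq (exp_pos _).le, sqrt_div' _ hu.le]
  ring

theorem integral_inv_sqrt_cosh_sub_cosh_bound :
    ∃ C : ℝ, 0 < C ∧ ∀ ρ : ℝ, 0 ≤ ρ →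
      ∫ s in Set.Ioi ρ, s / Real.sqrt (Real.cosh s - Real.cosh ρ) ≤
        C * Real.sqrt (if ρ = 0 then 1 else ρ / Real.sinh ρ) * Real.sqrt (1 + ρ) := by
  set g : ℝ → ℝ := fun u ↦ √(32 / u * exp (-(u / 8)))
  set I := ∫ u in Ioi 0, g u
  have hI : 0 ≤ I := setIntegral_nonneg measurableSet_Ioi fun u _ ↦ sqrt_nonneg _
  refine ⟨I + 1, by positivity, fun ρ hρ ↦ ?_⟩
  have hK : 0 ≤ √(if ρ = 0 then 1 else ρ / sinh ρ) * √(1 + ρ) := by positivity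
  calc ∫ s in Ioi ρ, s / √(cosh s - cosh ρ)
      ≤ ∫ s in Ioi ρ, √(if ρ = 0 then 1 else ρ / sinh ρ) * √(1 + ρ) * g (s - ρ) := by
        refine integral_mono_of_nonneg ?_
          ((IntegrableOn.comp_sub_right_Ioi integrableOn_sqrt_div_mul_exp ρ).const_mul _) ?_
        · filter_upwards [ae_restrict_mem measurableSet_Ioi] with s (hs : ρ < s)
          have := hρ.trans_lt hs
          positivity
        · filter_upwards [ae_restrict_mem measurableSet_Ioi] with s (hs : ρ < s)
          exact div_sqrt_cosh_sub_cosh_le hρ hs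
    _ = √(if ρ = 0 then 1 else ρ / sinh ρ) * √(1 + ρ) * I := by
        rw [integral_const_mul, setIntegral_comp_sub_right_Ioi g ρ]
    _ ≤ (I + 1) * √(if ρ = 0 then 1 else ρ / sinh ρ) * √(1 + ρ) := by nlinarith
end

section
/- Let u : ℝ × (0,∞) → ℂ be smooth and radial, and define J(t)u = r·u + 2it·∂_r u + 2it·coth(r)·u and L u = i∂_t u + ∂_r² u + 2 coth(r)·∂_r u. Then the commutator vanishes: J(t)(L u) = L(J(t)u) pointwise on ℝ × (0,∞). -/
open Complex

/-- Galilean-type operator `J(t) = r + 2it ∂_r + 2it coth r` on radial functions of `H³`. -/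
noncomputable def Jop (u : ℝ → ℝ → ℂ) (t r : ℝ) : ℂ :=
  (r : ℂ) * u t r + 2 * I * t * deriv (u t) r +
    2 * I * t * ((Real.cosh r / Real.sinh r : ℝ) : ℂ) * u t r

/-- Radial Schrödinger operator `L = i∂_t + ∂_r² + 2 coth r ∂_r` on `H³`. -/
noncomputable def Lop (u : ℝ → ℝ → ℂ) (t r : ℝ) : ℂ :=
  I * deriv (fun τ => u τ r) t + deriv (deriv (u t)) r +
    2 * ((Real.cosh r / Real.sinh r : ℝ) : ℂ) * deriv (u t) r

noncomputable def pT (G : ℝ × ℝ → ℂ) (p : ℝ × ℝ) : ℂ := fderiv ℝ G p (1, 0)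
noncomputable def pR (G : ℝ × ℝ → ℂ) (p : ℝ × ℝ) : ℂ := fderiv ℝ G p (0, 1)

lemma hasDerivAt_pT {G : ℝ × ℝ → ℂ} (hG : ContDiff ℝ (⊤ : ℕ∞) G) (t r : ℝ) :
    HasDerivAt (fun τ => G (τ, r)) (pT G (t, r)) t := by
  have h := ((hG.differentiable (by simp)) (t, r)).hasFDerivAt
  have hline : HasDerivAt (fun τ : ℝ => ((τ, r) : ℝ × ℝ)) (1, 0) t :=
    (hasDerivAt_id t).prodMk (hasDerivAt_const t r)
  exact h.comp_hasDerivAt t hline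

lemma hasDerivAt_pR {G : ℝ × ℝ → ℂ} (hG : ContDiff ℝ (⊤ : ℕ∞) G) (t r : ℝ) :
    HasDerivAt (fun ρ => G (t, ρ)) (pR G (t, r)) r := by
  have h := ((hG.differentiable (by simp)) (t, r)).hasFDerivAt
  have hline : HasDerivAt (fun ρ : ℝ => ((t, ρ) : ℝ × ℝ)) (0, 1) r :=
    (hasDerivAt_const r t).prodMk (hasDerivAt_id r)
  exact h.comp_hasDerivAt r hline

lemma contDiff_pT {G : ℝ × ℝ → ℂ} (hG : ContDiff ℝ (⊤ : ℕ∞) G) : ContDiff ℝ (⊤ : ℕ∞) (pT G) :=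
  (hG.fderiv_right (by simp)).clm_apply contDiff_const

lemma contDiff_pR {G : ℝ × ℝ → ℂ} (hG : ContDiff ℝ (⊤ : ℕ∞) G) : ContDiff ℝ (⊤ : ℕ∞) (pR G) :=
  (hG.fderiv_right (by simp)).clm_apply contDiff_const

lemma clairaut {G : ℝ × ℝ → ℂ} (hG : ContDiff ℝ (⊤ : ℕ∞) G) (p : ℝ × ℝ) :
    pT (pR G) p = pR (pT G) p := by
  have hdG : Differentiable ℝ G := hG.differentiable (by simp)
  have hf' : Differentiable ℝ (fderiv ℝ G) :=
    (hG.fderiv_right (m := (⊤ : ℕ∞)) (by simp)).differentiable (by simp)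
  have hsymm := second_derivative_symmetric (fun y => (hdG y).hasFDerivAt)
    ((hf' p).hasFDerivAt)
  have key : ∀ v w : ℝ × ℝ,
      fderiv ℝ (fun q => fderiv ℝ G q v) p w = fderiv ℝ (fderiv ℝ G) p w v := by
    intro v w
    rw [fderiv_clm_apply (hf' p) (differentiableAt_const v)]
    simp
  show fderiv ℝ (fun q => fderiv ℝ G q (0,1)) p (1,0)
      = fderiv ℝ (fun q => fderiv ℝ G q (1,0)) p (0,1)
  rw [key, key, hsymm]

lemma hasDerivAt_coth_real {r : ℝ} (hr : r ≠ 0) :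
    HasDerivAt (fun x : ℝ => Real.cosh x / Real.sinh x)
      (1 - (Real.cosh r / Real.sinh r) ^ 2) r := by
  have hs : Real.sinh r ≠ 0 := Real.sinh_ne_zero.2 hr
  have h : HasDerivAt (fun x : ℝ => Real.cosh x / Real.sinh x) _ r :=
    (Real.hasDerivAt_cosh r).div (Real.hasDerivAt_sinh r) hs
  convert h using 1
  have := Real.cosh_sq_sub_sinh_sq r
  rw [eq_div_iff (pow_ne_zero 2 hs), sub_mul, div_pow, div_mul_cancel₀ _ (pow_ne_zero 2 hs)]
  nlinarith [this]

lemma hasDerivAt_cothC {r : ℝ} (hr : r ≠ 0) :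
    HasDerivAt (fun x : ℝ => ((Real.cosh x / Real.sinh x : ℝ) : ℂ))
      ((1 - (Real.cosh r / Real.sinh r) ^ 2 : ℝ) : ℂ) r :=
  (hasDerivAt_coth_real hr).ofReal_comp

lemma hasDerivAt_cothC_sq {r : ℝ} (hr : r ≠ 0) :
    HasDerivAt (fun x : ℝ => ((1 - (Real.cosh x / Real.sinh x) ^ 2 : ℝ) : ℂ))
      ((-(2 * (Real.cosh r / Real.sinh r) * (1 - (Real.cosh r / Real.sinh r) ^ 2)) : ℝ) : ℂ) r := by
  have h := ((hasDerivAt_coth_real hr).pow 2).const_sub 1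
  simp only [Pi.pow_apply] at h
  have h2 := h.ofReal_comp
  convert h2 using 1
  push_cast
  ring

lemma hasDerivAt_ofRealC (t : ℝ) : HasDerivAt (fun τ : ℝ => (τ : ℂ)) 1 t :=
  (hasDerivAt_id t).ofReal_comp

theorem J_commutes_with_L (u : ℝ → ℝ → ℂ)
    (hu : ContDiff ℝ (⊤ : ℕ∞) fun p : ℝ × ℝ => u p.1 p.2) :
    ∀ t : ℝ, ∀ r : ℝ, 0 < r → Jop (Lop u) t r = Lop (Jop u) t r := by
  intro t r hr
  set F : ℝ × ℝ → ℂ := fun p => u p.1 p.2 with hF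
  have hT := contDiff_pT hu
  have hR := contDiff_pR hu
  have hRR := contDiff_pR hR
  have hRT := contDiff_pR hT
  have hRRR := contDiff_pR hRR
  -- coth as complex function
  set cc : ℝ → ℂ := fun x => ((Real.cosh x / Real.sinh x : ℝ) : ℂ) with hcc
  set cs : ℝ → ℂ := fun x => ((1 - (Real.cosh x / Real.sinh x) ^ 2 : ℝ) : ℂ) with hcs
  -- basic pointwise rewrites
  have h1 : ∀ τ ρ : ℝ, deriv (u τ) ρ = pR F (τ, ρ) := fun τ ρ => (hasDerivAt_pR hu τ ρ).deriv
  have h2 : ∀ τ ρ : ℝ, deriv (fun σ => u σ ρ) τ = pT F (τ, ρ) :=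
    fun τ ρ => (hasDerivAt_pT hu τ ρ).deriv
  have h1f : ∀ τ : ℝ, deriv (u τ) = fun ρ => pR F (τ, ρ) := fun τ => funext (h1 τ)
  have h3 : ∀ τ ρ : ℝ, deriv (deriv (u τ)) ρ = pR (pR F) (τ, ρ) := by
    intro τ ρ
    rw [h1f τ]
    exact (hasDerivAt_pR hR τ ρ).deriv
  -- the function Lop u t
  have hLfun : Lop u t = fun ρ =>
      I * pT F (t, ρ) + pR (pR F) (t, ρ) + 2 * cc ρ * pR F (t, ρ) := by
    funext ρ
    simp only [Lop, h1, h2, h3, hcc]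
  -- derivative of Lop u t at r
  have hs0 : r ≠ 0 := hr.ne'
  have hdL : HasDerivAt (Lop u t)
      (I * pR (pT F) (t, r) + pR (pR (pR F)) (t, r) +
        (2 * cs r * pR F (t, r) + 2 * cc r * pR (pR F) (t, r))) r := by
    rw [hLfun]
    exact (((hasDerivAt_pR hT t r).const_mul I).add (hasDerivAt_pR hRR t r)).add
      (((hasDerivAt_cothC hs0).const_mul 2).mul (hasDerivAt_pR hR t r))
  -- time derivative of Jop u · r at t
  have hJt : HasDerivAt (fun τ => Jop u τ r)
      ((r : ℂ) * pT F (t, r) +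
        ((2 * I * 1) * pR F (t, r) + (2 * I * (t:ℂ)) * pT (pR F) (t, r)) +
        ((2 * I * 1 * cc r) * F (t, r) + (2 * I * (t:ℂ) * cc r) * pT F (t, r))) t := by
    have e1 : (fun τ => Jop u τ r) = fun τ =>
        (r : ℂ) * F (τ, r) + (2 * I * (τ:ℂ)) * pR F (τ, r) +
          (2 * I * (τ:ℂ) * cc r) * F (τ, r) := by
      funext τ
      simp only [Jop, h1, hcc, hF]
    rw [e1]
    have hA : HasDerivAt (fun τ : ℝ => (r:ℂ) * F (τ, r)) ((r:ℂ) * pT F (t, r)) t :=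
      (hasDerivAt_pT hu t r).const_mul _
    have hlin : HasDerivAt (fun τ : ℝ => 2 * I * (τ:ℂ)) (2 * I * 1) t :=
      (hasDerivAt_ofRealC t).const_mul (2 * I)
    have hB : HasDerivAt (fun τ : ℝ => (2 * I * (τ:ℂ)) * pR F (τ, r))
        ((2 * I * 1) * pR F (t, r) + (2 * I * (t:ℂ)) * pT (pR F) (t, r)) t :=
      hlin.mul (hasDerivAt_pT hR t r)
    have hlin2 : HasDerivAt (fun τ : ℝ => 2 * I * (τ:ℂ) * cc r) (2 * I * 1 * cc r) t :=
      hlin.mul_const _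
    have hC : HasDerivAt (fun τ : ℝ => (2 * I * (τ:ℂ) * cc r) * F (τ, r))
        ((2 * I * 1 * cc r) * F (t, r) + (2 * I * (t:ℂ) * cc r) * pT F (t, r)) t :=
      hlin2.mul (hasDerivAt_pT hu t r)
    exact (hA.add hB).add hC
  -- the function Jop u t and its first/second radial derivatives
  have hJfun : Jop u t = fun ρ : ℝ =>
      (ρ : ℂ) * F (t, ρ) + 2 * I * (t:ℂ) * pR F (t, ρ) +
        2 * I * (t:ℂ) * cc ρ * F (t, ρ) := by
    funext ρ
    simp only [Jop, h1, hcc, hF]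
  set g1 : ℝ → ℂ := fun ρ : ℝ =>
      (1 * F (t, ρ) + (ρ:ℂ) * pR F (t, ρ)) + 2 * I * (t:ℂ) * pR (pR F) (t, ρ) +
        ((2 * I * (t:ℂ) * cs ρ) * F (t, ρ) + (2 * I * (t:ℂ) * cc ρ) * pR F (t, ρ)) with hg1def
  have hg1 : ∀ ρ : ℝ, ρ ≠ 0 → HasDerivAt (Jop u t) (g1 ρ) ρ := by
    intro ρ hρ
    rw [hJfun]
    have hA : HasDerivAt (fun x : ℝ => (x:ℂ) * F (t, x))
        (1 * F (t, ρ) + (ρ:ℂ) * pR F (t, ρ)) ρ :=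
      (hasDerivAt_ofRealC ρ).mul (hasDerivAt_pR hu t ρ)
    have hB : HasDerivAt (fun x : ℝ => 2 * I * (t:ℂ) * pR F (t, x))
        (2 * I * (t:ℂ) * pR (pR F) (t, ρ)) ρ :=
      (hasDerivAt_pR hR t ρ).const_mul _
    have hc1 : HasDerivAt (fun x : ℝ => 2 * I * (t:ℂ) * cc x)
        (2 * I * (t:ℂ) * cs ρ) ρ := (hasDerivAt_cothC hρ).const_mul _
    have hC : HasDerivAt (fun x : ℝ => 2 * I * (t:ℂ) * cc x * F (t, x))
        ((2 * I * (t:ℂ) * cs ρ) * F (t, ρ) + (2 * I * (t:ℂ) * cc ρ) * pR F (t, ρ)) ρ :=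
      hc1.mul (hasDerivAt_pR hu t ρ)
    exact (hA.add hB).add hC
  have hderivJ : deriv (Jop u t) r = g1 r := (hg1 r hs0).deriv
  have hEv : deriv (Jop u t) =ᶠ[nhds r] g1 := by
    filter_upwards [eventually_gt_nhds hr] with ρ hρ
    exact (hg1 ρ hρ.ne').deriv
  -- second radial derivative of Jop u t
  have hg1' : HasDerivAt g1
      ((1 * pR F (t, r) + (1 * pR F (t, r) + (r:ℂ) * pR (pR F) (t, r))) +
        2 * I * (t:ℂ) * pR (pR (pR F)) (t, r) +
        (((2 * I * (t:ℂ)) * ((-(2 * (Real.cosh r / Real.sinh r) *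
            (1 - (Real.cosh r / Real.sinh r) ^ 2)) : ℝ) : ℂ)) * F (t, r) +
            (2 * I * (t:ℂ) * cs r) * pR F (t, r) +
          ((2 * I * (t:ℂ) * cs r) * pR F (t, r) + (2 * I * (t:ℂ) * cc r) * pR (pR F) (t, r)))) r := by
    have hA : HasDerivAt (fun x : ℝ => 1 * F (t, x) + (x:ℂ) * pR F (t, x))
        (1 * pR F (t, r) + (1 * pR F (t, r) + (r:ℂ) * pR (pR F) (t, r))) r :=
      ((hasDerivAt_pR hu t r).const_mul 1).add
        ((hasDerivAt_ofRealC r).mul (hasDerivAt_pR hR t r))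
    have hB : HasDerivAt (fun x : ℝ => 2 * I * (t:ℂ) * pR (pR F) (t, x))
        (2 * I * (t:ℂ) * pR (pR (pR F)) (t, r)) r :=
      (hasDerivAt_pR hRR t r).const_mul _
    have hcs' : HasDerivAt (fun x : ℝ => 2 * I * (t:ℂ) * cs x)
        ((2 * I * (t:ℂ)) * ((-(2 * (Real.cosh r / Real.sinh r) *
          (1 - (Real.cosh r / Real.sinh r) ^ 2)) : ℝ) : ℂ)) r :=
      (hasDerivAt_cothC_sq hs0).const_mul _
    have hC : HasDerivAt (fun x : ℝ => (2 * I * (t:ℂ) * cs x) * F (t, x))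
        (((2 * I * (t:ℂ)) * ((-(2 * (Real.cosh r / Real.sinh r) *
          (1 - (Real.cosh r / Real.sinh r) ^ 2)) : ℝ) : ℂ)) * F (t, r) +
          (2 * I * (t:ℂ) * cs r) * pR F (t, r)) r :=
      hcs'.mul (hasDerivAt_pR hu t r)
    have hc1 : HasDerivAt (fun x : ℝ => 2 * I * (t:ℂ) * cc x)
        (2 * I * (t:ℂ) * cs r) r := (hasDerivAt_cothC hs0).const_mul _
    have hD : HasDerivAt (fun x : ℝ => (2 * I * (t:ℂ) * cc x) * pR F (t, x))
        ((2 * I * (t:ℂ) * cs r) * pR F (t, r) + (2 * I * (t:ℂ) * cc r) * pR (pR F) (t, r)) r :=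
      hc1.mul (hasDerivAt_pR hR t r)
    exact (hA.add hB).add (hC.add hD)
  have hderiv2J : deriv (deriv (Jop u t)) r = deriv g1 r := hEv.deriv_eq
  have hderivg1 : deriv g1 r = _ := hg1'.deriv
  -- values
  have hLval : Lop u t r = I * pT F (t, r) + pR (pR F) (t, r) + 2 * cc r * pR F (t, r) := by
    rw [hLfun]
  have e2 : deriv (deriv (Jop u t)) r
      = (1 * pR F (t, r) + (1 * pR F (t, r) + (r:ℂ) * pR (pR F) (t, r))) +
        2 * I * (t:ℂ) * pR (pR (pR F)) (t, r) +
        (((2 * I * (t:ℂ)) * ((-(2 * (Real.cosh r / Real.sinh r) *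
            (1 - (Real.cosh r / Real.sinh r) ^ 2)) : ℝ) : ℂ)) * F (t, r) +
            (2 * I * (t:ℂ) * cs r) * pR F (t, r) +
          ((2 * I * (t:ℂ) * cs r) * pR F (t, r) + (2 * I * (t:ℂ) * cc r) * pR (pR F) (t, r))) := by
    rw [hderiv2J, hg1'.deriv]
  have eJ : Jop (Lop u) t r
      = (r:ℂ) * (I * pT F (t, r) + pR (pR F) (t, r) + 2 * cc r * pR F (t, r)) +
        2 * I * (t:ℂ) * (I * pR (pT F) (t, r) + pR (pR (pR F)) (t, r) +
          (2 * cs r * pR F (t, r) + 2 * cc r * pR (pR F) (t, r))) +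
        2 * I * (t:ℂ) * cc r *
          (I * pT F (t, r) + pR (pR F) (t, r) + 2 * cc r * pR F (t, r)) := by
    rw [Jop, hLval, hdL.deriv]
  have eL : Lop (Jop u) t r
      = I * ((r : ℂ) * pT F (t, r) +
          ((2 * I * 1) * pR F (t, r) + (2 * I * (t:ℂ)) * pT (pR F) (t, r)) +
          ((2 * I * 1 * cc r) * F (t, r) + (2 * I * (t:ℂ) * cc r) * pT F (t, r))) +
        ((1 * pR F (t, r) + (1 * pR F (t, r) + (r:ℂ) * pR (pR F) (t, r))) +
          2 * I * (t:ℂ) * pR (pR (pR F)) (t, r) +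
          (((2 * I * (t:ℂ)) * ((-(2 * (Real.cosh r / Real.sinh r) *
            (1 - (Real.cosh r / Real.sinh r) ^ 2)) : ℝ) : ℂ)) * F (t, r) +
            (2 * I * (t:ℂ) * cs r) * pR F (t, r) +
          ((2 * I * (t:ℂ) * cs r) * pR F (t, r) + (2 * I * (t:ℂ) * cc r) * pR (pR F) (t, r)))) +
        2 * cc r * g1 r := by
    rw [Lop, hJt.deriv, e2, hderivJ]
  rw [eJ, eL]
  simp only [hg1def]
  rw [clairaut hu (t, r)]
  have hrel : cs r = 1 - cc r ^ 2 := by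
    simp only [hcs, hcc]
    push_cast
    ring
  have hrel2 : ((-(2 * (Real.cosh r / Real.sinh r) *
      (1 - (Real.cosh r / Real.sinh r) ^ 2)) : ℝ) : ℂ) = -(2 * cc r * (1 - cc r ^ 2)) := by
    simp only [hcc]
    push_cast
    ring
  rw [hrel, hrel2]
  linear_combination (-2 * pR F (t, r) - 2 * cc r * F (t, r)) * Complex.I_sq
end
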